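/- arXiv:1909.00016 — 2 statements merged into one kernel-verified Lean document; each statement's English description precedes it below -/
import Mathlib

section
/- Let 0 < α < 1, T > 0, L ≥ 0, C_α > 0, and let A ≥ 0. Suppose a sequence of continuous functions w_k : (0,T] → [0,∞) satisfies w_0(t) ≤ A t^{αδ-1} and w_{k}(t) ≤ A t^{αδ-1} + L C_α ∫₀^t (t-s)^{α-1} w_{k-1}(s) ds for all k ≥ 1 and 0 < t ≤ T, where 0 < δ ≤ 1. Then for every k ≥ 1 and 0 < t ≤ T, t^{1-αδ} w_k(t) ≤ A Γ(αδ) Σ_{j=0}^{k} (L C_α t^α Γ(α))^j / Γ(α(j+δ)). -/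
open MeasureTheory

lemma betaRealIntegral {a b t : ℝ} (ha : 0 < a) (hb : 0 < b) (ht : 0 < t) :
    ∫ s in (0:ℝ)..t, (t - s) ^ (a - 1) * s ^ (b - 1)
      = t ^ (a + b - 1) * (Real.Gamma a * Real.Gamma b / Real.Gamma (a + b)) := by
  have hare : (0:ℝ) < (Complex.ofReal a).re := by simpa using ha
  have hbre : (0:ℝ) < (Complex.ofReal b).re := by simpa using hb
  have hG : Complex.Gamma ((b:ℂ) + (a:ℂ)) ≠ 0 := by
    rw [show ((b:ℂ) + (a:ℂ)) = ((b + a : ℝ) : ℂ) by push_cast; ring, Complex.Gamma_ofReal]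
    exact_mod_cast (Real.Gamma_pos_of_pos (by linarith)).ne'
  have hbeta := Complex.Gamma_mul_Gamma_eq_betaIntegral hbre hare
  have hb2 : Complex.betaIntegral (b:ℂ) (a:ℂ)
      = Complex.Gamma (b:ℂ) * Complex.Gamma (a:ℂ) / Complex.Gamma ((b:ℂ) + (a:ℂ)) := by
    rw [eq_div_iff hG, mul_comm]; exact hbeta.symm
  have hscaled := Complex.betaIntegral_scaled (b:ℂ) (a:ℂ) ht
  have key : (∫ x in (0:ℝ)..t, ((x:ℂ) ^ ((b:ℂ) - 1) * ((t:ℂ) - (x:ℂ)) ^ ((a:ℂ) - 1)))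
      = ((∫ s in (0:ℝ)..t, (t - s) ^ (a - 1) * s ^ (b - 1) : ℝ) : ℂ) := by
    rw [← intervalIntegral.integral_ofReal]
    rw [intervalIntegral.integral_of_le ht.le, intervalIntegral.integral_of_le ht.le]
    refine setIntegral_congr_fun measurableSet_Ioc fun x hx => ?_
    have hx0 : (0:ℝ) ≤ x := hx.1.le
    have htx : (0:ℝ) ≤ t - x := by linarith [hx.2]
    rw [Complex.ofReal_mul, Complex.ofReal_cpow htx, Complex.ofReal_cpow hx0]
    push_cast
    ring
  rw [key] at hscaled
  rw [hb2] at hscaled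
  have hrhs : ((t:ℂ) ^ ((b:ℂ) + (a:ℂ) - 1)) = ((t ^ (a + b - 1) : ℝ) : ℂ) := by
    rw [Complex.ofReal_cpow ht.le]
    congr 1
    push_cast; ring
  rw [hrhs, show ((b:ℂ) + (a:ℂ)) = ((b + a : ℝ) : ℂ) by push_cast; ring,
    Complex.Gamma_ofReal, Complex.Gamma_ofReal, Complex.Gamma_ofReal,
    show b + a = a + b by ring] at hscaled
  have : ((∫ s in (0:ℝ)..t, (t - s) ^ (a - 1) * s ^ (b - 1) : ℝ) : ℂ)
      = ((t ^ (a + b - 1) * (Real.Gamma a * Real.Gamma b / Real.Gamma (a + b)) : ℝ) : ℂ) := by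
    rw [hscaled]; push_cast; ring
  exact_mod_cast this

lemma betaRealIntegrable {a b t : ℝ} (ha : 0 < a) (hb : 0 < b) (ht : 0 < t) :
    IntervalIntegrable (fun s => (t - s) ^ (a - 1) * s ^ (b - 1)) volume 0 t := by
  have h1 : IntervalIntegrable (fun s => (t - s) ^ (a - 1) * s ^ (b - 1)) volume 0 (t / 2) := by
    apply IntervalIntegrable.continuousOn_mul (g := fun s => (t - s) ^ (a - 1))
      (f := fun s => s ^ (b - 1))
    · exact intervalIntegral.intervalIntegrable_rpow' (by linarith)
    · apply ContinuousOn.rpow_const (Continuous.continuousOn (by continuity))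
      intro x hx
      rw [Set.uIcc_of_le (by linarith)] at hx
      left
      have : x ≤ t / 2 := hx.2
      intro h; nlinarith [sub_eq_zero.mp h]
  have h2 : IntervalIntegrable (fun s => (t - s) ^ (a - 1) * s ^ (b - 1)) volume (t / 2) t := by
    apply IntervalIntegrable.mul_continuousOn (f := fun s => (t - s) ^ (a - 1))
      (g := fun s => s ^ (b - 1))
    · have := (intervalIntegral.intervalIntegrable_rpow' (a := 0) (b := t / 2) (r := a - 1)
        (by linarith)).comp_sub_left t
      simpa [sub_half] using this.symm
    · apply ContinuousOn.rpow_const (Continuous.continuousOn (by continuity))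
      intro x hx
      rw [Set.uIcc_of_le (by linarith)] at hx
      left
      have : t / 2 ≤ x := hx.1
      exact (show (0:ℝ) < x by linarith).ne'
  exact h1.trans h2

open MeasureTheory in
/-- Iterated weakly-singular Grönwall bound: if `w_0(t) ≤ A t^{αδ-1}` and
`w_k(t) ≤ A t^{αδ-1} + L C_α ∫₀^t (t-s)^{α-1} w_{k-1}(s) ds`, then
`t^{1-αδ} w_k(t) ≤ A Γ(αδ) Σ_{j=0}^k (L C_α t^α Γ(α))^j / Γ(α(j+δ))`. -/
theorem stmt6 (α T L Cα A δ : ℝ) (hα : 0 < α) (hα1 : α < 1) (hT : 0 < T)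
    (hL : 0 ≤ L) (hCα : 0 < Cα) (hA : 0 ≤ A) (hδ : 0 < δ) (hδ1 : δ ≤ 1)
    (w : ℕ → ℝ → ℝ)
    (hw_cont : ∀ k, ContinuousOn (w k) (Set.Ioc 0 T))
    (hw_nonneg : ∀ k t, 0 < t → t ≤ T → 0 ≤ w k t)
    (h0 : ∀ t, 0 < t → t ≤ T → w 0 t ≤ A * t ^ (α * δ - 1))
    (hk : ∀ k : ℕ, 1 ≤ k → ∀ t, 0 < t → t ≤ T →
      w k t ≤ A * t ^ (α * δ - 1) +
        L * Cα * ∫ s in (0 : ℝ)..t, (t - s) ^ (α - 1) * w (k - 1) s) :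
    ∀ k : ℕ, 1 ≤ k → ∀ t, 0 < t → t ≤ T →
      t ^ (1 - α * δ) * w k t ≤
        A * Real.Gamma (α * δ) *
          ∑ j ∈ Finset.range (k + 1),
            (L * Cα * t ^ α * Real.Gamma α) ^ j / Real.Gamma (α * ((j : ℝ) + δ)) := by
  have hΓα := Real.Gamma_pos_of_pos hα
  have hΓαδ := Real.Gamma_pos_of_pos (mul_pos hα hδ)
  set c : ℕ → ℝ := fun j =>
    A * Real.Gamma (α * δ) * (L * Cα * Real.Gamma α) ^ j / Real.Gamma (α * ((j : ℝ) + δ))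
    with hc
  have hΓj : ∀ j : ℕ, 0 < Real.Gamma (α * ((j : ℝ) + δ)) := fun j =>
    Real.Gamma_pos_of_pos (by positivity)
  have hc0 : ∀ j, 0 ≤ c j := fun j => by
    have h1 := hΓj j
    have h2 : (0:ℝ) ≤ L * Cα * Real.Gamma α := by positivity
    rw [hc]
    positivity
  have hc00 : c 0 = A := by
    simp only [hc, Nat.cast_zero, zero_add, pow_zero, mul_one]
    rw [mul_div_assoc, div_self hΓαδ.ne', mul_one]
  have main : ∀ k : ℕ, ∀ t, 0 < t → t ≤ T →
      w k t ≤ ∑ j ∈ Finset.range (k + 1), c j * t ^ (α * ((j : ℝ) + δ) - 1) := by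
    intro k
    induction k with
    | zero =>
      intro t ht htT
      rw [Finset.sum_range_one, hc00]
      have : α * ((0:ℕ) + δ : ℝ) - 1 = α * δ - 1 := by push_cast; ring
      rw [this]
      exact h0 t ht htT
    | succ k ih =>
      intro t ht htT
      have hw := hk (k + 1) (Nat.le_add_left 1 k) t ht htT
      rw [Nat.add_sub_cancel] at hw
      set g : ℝ → ℝ := fun s => ∑ j ∈ Finset.range (k + 1),
        c j * ((t - s) ^ (α - 1) * s ^ (α * ((j : ℝ) + δ) - 1)) with hg
      have hbpos : ∀ j : ℕ, 0 < α * ((j : ℝ) + δ) := fun j => by positivity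
      have hgint : IntervalIntegrable g volume 0 t := by
        have : g = ∑ j ∈ Finset.range (k + 1),
            (fun s => c j * ((t - s) ^ (α - 1) * s ^ (α * ((j : ℝ) + δ) - 1))) := by
          ext s; simp [hg]
        rw [this]
        exact IntervalIntegrable.sum _ fun j _ =>
          (betaRealIntegrable hα (hbpos j) ht).const_mul (c j)
      have hgnn : ∀ s ∈ Set.Icc (0:ℝ) t, 0 ≤ g s := by
        intro s hs
        refine Finset.sum_nonneg fun j _ => ?_
        have hts : (0:ℝ) ≤ t - s := by linarith [hs.2]
        exact mul_nonneg (hc0 j)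
          (mul_nonneg (Real.rpow_nonneg hts _) (Real.rpow_nonneg hs.1 _))
      have hint_le : (∫ s in (0:ℝ)..t, (t - s) ^ (α - 1) * w k s) ≤ ∫ s in (0:ℝ)..t, g s := by
        by_cases hif : IntervalIntegrable (fun s => (t - s) ^ (α - 1) * w k s) volume 0 t
        · rw [intervalIntegral.integral_of_le ht.le, intervalIntegral.integral_of_le ht.le]
          refine setIntegral_mono_on
            ((intervalIntegrable_iff_integrableOn_Ioc_of_le ht.le).mp hif)
            ((intervalIntegrable_iff_integrableOn_Ioc_of_le ht.le).mp hgint)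
            measurableSet_Ioc ?_
          intro s hs
          have h1 := ih s hs.1 (hs.2.trans htT)
          have h2 : (0:ℝ) ≤ (t - s) ^ (α - 1) := Real.rpow_nonneg (by linarith [hs.2]) _
          calc (t - s) ^ (α - 1) * w k s
              ≤ (t - s) ^ (α - 1) * ∑ j ∈ Finset.range (k + 1),
                  c j * s ^ (α * ((j : ℝ) + δ) - 1) := mul_le_mul_of_nonneg_left h1 h2
            _ = g s := by
                rw [hg, Finset.mul_sum]
                exact Finset.sum_congr rfl fun j _ => by ring
        · rw [intervalIntegral.integral_undef hif]
          exact intervalIntegral.integral_nonneg ht.le hgnn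
      have hgval : (∫ s in (0:ℝ)..t, g s) = ∑ j ∈ Finset.range (k + 1),
          c j * (t ^ (α + α * ((j : ℝ) + δ) - 1) *
            (Real.Gamma α * Real.Gamma (α * ((j : ℝ) + δ)) /
              Real.Gamma (α + α * ((j : ℝ) + δ)))) := by
        rw [show (∫ s in (0:ℝ)..t, g s) = ∫ s in (0:ℝ)..t, ∑ j ∈ Finset.range (k + 1),
              c j * ((t - s) ^ (α - 1) * s ^ (α * ((j : ℝ) + δ) - 1)) from rfl,
          intervalIntegral.integral_finset_sum (fun j _ =>
            (betaRealIntegrable hα (hbpos j) ht).const_mul (c j))]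
        refine Finset.sum_congr rfl fun j _ => ?_
        rw [intervalIntegral.integral_const_mul, betaRealIntegral hα (hbpos j) ht]
      have step : w (k + 1) t ≤ A * t ^ (α * δ - 1) + L * Cα * ∑ j ∈ Finset.range (k + 1),
          c j * (t ^ (α + α * ((j : ℝ) + δ) - 1) *
            (Real.Gamma α * Real.Gamma (α * ((j : ℝ) + δ)) /
              Real.Gamma (α + α * ((j : ℝ) + δ)))) := by
        refine hw.trans ?_
        rw [← hgval]
        have := mul_le_mul_of_nonneg_left hint_le (mul_nonneg hL hCα.le)
        linarith
      refine step.trans (le_of_eq ?_)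
      rw [Finset.sum_range_succ' (fun j => c j * t ^ (α * ((j : ℝ) + δ) - 1)) (k + 1)]
      rw [Finset.mul_sum, add_comm]
      congr 1
      · refine Finset.sum_congr rfl fun j _ => ?_
        have hGj := (hΓj j).ne'
        have hGj1 := (hΓj (j + 1)).ne'
        have hGs : Real.Gamma (α + α * ((j : ℝ) + δ))
            = Real.Gamma (α * (((j + 1 : ℕ) : ℝ) + δ)) := by
          congr 1; push_cast; ring
        have hts : t ^ (α + α * ((j : ℝ) + δ) - 1)
            = t ^ (α * (((j + 1 : ℕ) : ℝ) + δ) - 1) := by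
          congr 1; push_cast; ring
        rw [hGs, hts, hc]
        push_cast at hGj1 ⊢
        field_simp
        ring
      · rw [hc00]
        congr 1
        push_cast; ring
  intro k _ t ht htT
  have hbound := main k t ht htT
  have ht1 : (0:ℝ) ≤ t ^ (1 - α * δ) := Real.rpow_nonneg ht.le _
  calc t ^ (1 - α * δ) * w k t
      ≤ t ^ (1 - α * δ) * ∑ j ∈ Finset.range (k + 1), c j * t ^ (α * ((j : ℝ) + δ) - 1) :=
        mul_le_mul_of_nonneg_left hbound ht1
    _ = A * Real.Gamma (α * δ) * ∑ j ∈ Finset.range (k + 1),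
          (L * Cα * t ^ α * Real.Gamma α) ^ j / Real.Gamma (α * ((j : ℝ) + δ)) := by
        rw [Finset.mul_sum, Finset.mul_sum]
        refine Finset.sum_congr rfl fun j _ => ?_
        have hexp : t ^ (1 - α * δ) * t ^ (α * ((j : ℝ) + δ) - 1) = (t ^ α) ^ j := by
          rw [← Real.rpow_add ht, show 1 - α * δ + (α * ((j : ℝ) + δ) - 1) = α * (j : ℝ) by ring,
            Real.rpow_mul ht.le, Real.rpow_natCast]
        have hmul : (L * Cα * Real.Gamma α) ^ j * (t ^ α) ^ j
            = (L * Cα * t ^ α * Real.Gamma α) ^ j := by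
          rw [← mul_pow]; ring_nf
        rw [hc]
        rw [show t ^ (1 - α * δ) * (A * Real.Gamma (α * δ) * (L * Cα * Real.Gamma α) ^ j /
              Real.Gamma (α * ((j : ℝ) + δ)) * t ^ (α * ((j : ℝ) + δ) - 1))
            = A * Real.Gamma (α * δ) * ((L * Cα * Real.Gamma α) ^ j *
              (t ^ (1 - α * δ) * t ^ (α * ((j : ℝ) + δ) - 1))) /
              Real.Gamma (α * ((j : ℝ) + δ)) from by ring,
          hexp, hmul]
        ring
end

section
/- Let 0 < α < 1/3 and T > 0. Then sup_{λ ≥ 0} ∫₀^T λ² t^{−α} / (1 + λ t^α)² dt < ∞, and the supremum is bounded by a constant depending only on α and T. -/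
/-- For `0 < α < 1/3` and `T > 0`,
`sup_{λ ≥ 0} ∫₀^T λ² t^{-α}/(1 + λ t^α)² dt` is finite, bounded by a constant
depending only on `α` and `T`. -/
theorem stmt15 (α T : ℝ) (hα : 0 < α) (hα1 : α < 1 / 3) (hT : 0 < T) :
    ∃ C, 0 < C ∧ ∀ lam : ℝ, 0 ≤ lam →
      (∫ t in (0 : ℝ)..T, lam ^ 2 * t ^ (-α) / (1 + lam * t ^ α) ^ 2) ≤ C := by
  have hr : (-1 : ℝ) < -(3 * α) := by linarith
  have hig : IntervalIntegrable (fun t : ℝ => t ^ (-(3 * α))) MeasureTheory.volume 0 T :=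
    intervalIntegral.intervalIntegrable_rpow' hr
  refine ⟨(∫ t in (0 : ℝ)..T, t ^ (-(3 * α))) + 1, ?_, ?_⟩
  · have h0 : 0 ≤ ∫ t in (0 : ℝ)..T, t ^ (-(3 * α)) :=
      intervalIntegral.integral_nonneg hT.le (fun x hx => Real.rpow_nonneg hx.1 _)
    linarith
  · intro lam hlam
    have key : (∫ t in (0 : ℝ)..T, lam ^ 2 * t ^ (-α) / (1 + lam * t ^ α) ^ 2)
        ≤ ∫ t in (0 : ℝ)..T, t ^ (-(3 * α)) := by
      rw [intervalIntegral.integral_of_le hT.le, intervalIntegral.integral_of_le hT.le]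
      apply MeasureTheory.integral_mono_of_nonneg
      · filter_upwards [MeasureTheory.ae_restrict_mem measurableSet_Ioc] with t ht
        have h1 : 0 ≤ t ^ (-α) := (Real.rpow_pos_of_pos ht.1 _).le
        exact div_nonneg (mul_nonneg (sq_nonneg _) h1) (sq_nonneg _)
      · exact hig.1
      · filter_upwards [MeasureTheory.ae_restrict_mem measurableSet_Ioc] with t ht
        have ht0 : 0 < t := ht.1
        have hx : 0 ≤ lam * t ^ α :=
          mul_nonneg hlam (Real.rpow_pos_of_pos ht0 _).le
        have hden : (0 : ℝ) < (1 + lam * t ^ α) ^ 2 := by positivity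
        rw [div_le_iff₀ hden]
        have e0 : (t ^ α) ^ 2 = t ^ (2 * α) := by
          rw [sq, ← Real.rpow_add ht0, two_mul]
        have e1 : t ^ (-(3 * α)) * (lam * t ^ α) ^ 2 = lam ^ 2 * t ^ (-α) := by
          have e2 : -(3 * α) + 2 * α = -α := by ring
          rw [mul_pow, e0, mul_comm (lam ^ 2), ← mul_assoc, ← Real.rpow_add ht0, e2,
            mul_comm]
        calc lam ^ 2 * t ^ (-α) = t ^ (-(3 * α)) * (lam * t ^ α) ^ 2 := e1.symm
          _ ≤ t ^ (-(3 * α)) * (1 + lam * t ^ α) ^ 2 :=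
            mul_le_mul_of_nonneg_left
              (pow_le_pow_left₀ hx (by linarith) 2) (Real.rpow_nonneg ht0.le _)
    linarith
end
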